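/- arXiv:2005.04281 — 2 statements merged into one kernel-verified Lean document; each statement's English description precedes it below -/
import Mathlib

section
/- Let T be a commutative noetherian integral domain and let R be a finitely generated associative (not necessarily commutative) T-algebra. If I and J are two-sided ideals of R such that both R/I and R/J are finitely generated as T-modules, then R/(IJ) is also a finitely generated T-module. -/
/-!
For `T`-submodules `P`, `Q` with `R ⧸ P`, `R ⧸ Q` finite, take finitely generated `V ∋ 1` and `W`
with `R = P + V` and `R = Q + W`.
Splitting each product `v * s` of a generator of `V` and an algebra generator `s` of `R` along
`R = P + V` yields a finite set `B ⊆ P` with `V * s ⊆ V + B R`; as `V + B R` contains `1` and is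
stable under right multiplication by the algebra generators, it is all of `R`. Then
`B R = B Q + B W ⊆ P Q + B W`, so `R = (V + B W) + P Q` with `V + B W` finitely generated.
-/

open Submodule
open scoped Pointwise

namespace Submodule

theorem CoFG.exists_fg_codisjoint {T M : Type*} [Ring T] [AddCommGroup M] [Module T M]
    {p : Submodule T M} (hp : p.CoFG) : ∃ V : Submodule T M, V.FG ∧ Codisjoint p V := by
  obtain ⟨s, hs⟩ := hp.fg_top
  choose lift hlift using p.mkQ_surjective
  refine ⟨span T (lift '' s), fg_span (s.finite_toSet.image lift), codisjoint_iff.2 ?_⟩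
  rw [← map_mkQ_eq_top, map_span, Set.image_image]
  simpa only [hlift, Set.image_id'] using hs

variable {T R : Type*} [CommRing T] [Ring R] [Algebra T R]

theorem eq_top_of_one_mem_of_mul_mem {M : Submodule T R} {S : Set R}
    (hS : Algebra.adjoin T S = ⊤) (h1 : 1 ∈ M) (hMS : ∀ m ∈ M, ∀ s ∈ S, m * s ∈ M) :
    M = ⊤ := by
  have hmul : ∀ r : R, ∀ m ∈ M, m * r ∈ M := by
    intro r
    induction (hS ▸ Algebra.mem_top : r ∈ Algebra.adjoin T S) using Algebra.adjoin_induction with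
    | mem s hs => exact fun m hm => hMS m hm s hs
    | algebraMap t =>
      exact fun m hm => by rw [← Algebra.commutes, ← Algebra.smul_def]; exact M.smul_mem t hm
    | add x y _ _ hx hy => exact fun m hm => by rw [mul_add]; exact add_mem (hx m hm) (hy m hm)
    | mul x y _ _ hx hy => exact fun m hm => by rw [← mul_assoc]; exact hy _ (hx m hm)
  exact eq_top_iff.2 fun r _ => one_mul r ▸ hmul r 1 h1

theorem exists_finite_subset_sup_span_mul_top_eq_top [Algebra.FiniteType T R]
    {P V : Submodule T R} (hV : V.FG) (h1 : 1 ∈ V) (hPV : Codisjoint P V) :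
    ∃ B : Set R, B.Finite ∧ B ⊆ P ∧ V ⊔ span T B * ⊤ = ⊤ := by
  obtain ⟨S, hS⟩ := Algebra.FiniteType.out (R := T) (A := R)
  obtain ⟨vs, rfl⟩ := hV
  have hsplit : ∀ x : R, ∃ e ∈ P, x - e ∈ span T (vs : Set R) := fun x => by
    obtain ⟨e, he, v, hv, hx⟩ := mem_sup.1 (hPV.eq_top ▸ mem_top : x ∈ P ⊔ span T vs)
    exact ⟨e, he, by rwa [← hx, add_sub_cancel_left]⟩
  choose e heP hev using hsplit
  set B := e '' ((vs : Set R) * (S : Set R))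
  have hB : ∀ x ∈ ((vs : Set R) * (S : Set R)), e x ∈ span T B * ⊤ := fun x hx => by
    simpa using mul_mem_mul (subset_span (Set.mem_image_of_mem e hx)) (mem_top (x := (1 : R)))
  refine ⟨B, (vs.finite_toSet.mul S.finite_toSet).image e,
    Set.image_subset_iff.2 fun x _ => heP x, ?_⟩
  refine eq_top_of_one_mem_of_mul_mem hS (mem_sup_left h1) fun m hm s hs => ?_
  obtain ⟨v, hv, n, hn, rfl⟩ := mem_sup.1 hm
  rw [add_mul]
  refine add_mem ?_ (mem_sup_right ?_)
  · have hvs : v * s ∈ span T ((vs : Set R) * (S : Set R)) :=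
      span_mul_span T (vs : Set R) (S : Set R) ▸ mul_mem_mul hv (subset_span hs)
    refine span_le.2 (fun x hx => ?_) hvs
    rw [← sub_add_cancel x (e x)]
    exact add_mem (mem_sup_left (hev x)) (mem_sup_right (hB x hx))
  · have : span T B * ⊤ * ⊤ ≤ span T B * ⊤ := by
      rw [mul_assoc]; exact mul_le_mul_right le_top _
    exact this (mul_mem_mul hn mem_top)

theorem CoFG.mul [Algebra.FiniteType T R] {P Q : Submodule T R} (hP : P.CoFG) (hQ : Q.CoFG) :
    (P * Q).CoFG := by
  obtain ⟨V, hV, hPV⟩ := hP.exists_fg_codisjoint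
  obtain ⟨W, hW, hQW⟩ := hQ.exists_fg_codisjoint
  obtain ⟨B, hB, hBP, hVB⟩ := exists_finite_subset_sup_span_mul_top_eq_top
    (hV.sup (fg_span_singleton 1)) (mem_sup_right (mem_span_singleton_self 1))
    (hPV.mono_right le_sup_left)
  refine ((hV.sup (fg_span_singleton 1)).sup ((fg_span hB).mul hW)).cofg_of_codisjoint ?_
  have hBQ : span T B * Q ≤ P * Q := mul_le_mul_left (span_le.2 hBP) _
  rw [codisjoint_iff, eq_top_iff, ← hVB, ← hQW.eq_top, mul_sup]
  exact sup_le (le_sup_of_le_left le_sup_left)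
    (sup_le (le_sup_of_le_right hBQ) (le_sup_of_le_left le_sup_right))

end Submodule

theorem stmt0_general {T R : Type*} [CommRing T]
    [Ring R] [Algebra T R] [Algebra.FiniteType T R]
    (I J : Ideal R)
    (hI : Module.Finite T (R ⧸ I.restrictScalars T))
    (hJ : Module.Finite T (R ⧸ J.restrictScalars T)) :
    Module.Finite T
      (R ⧸ (Ideal.span {x : R | ∃ a ∈ I, ∃ b ∈ J, x = a * b}).restrictScalars T) :=
  (CoFG.mul hI hJ).of_le <| mul_le.2 fun a ha b hb => Ideal.subset_span ⟨a, ha, b, hb, rfl⟩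

/-- Let `T` be a commutative noetherian integral domain and `R` a finitely
generated associative (not necessarily commutative) `T`-algebra.  If `I` and `J` are two-sided
ideals of `R` such that `R/I` and `R/J` are finitely generated `T`-modules, then `R/(IJ)` is a
finitely generated `T`-module.  Here `IJ` is the (left-)ideal generated by products `a*b` with
`a ∈ I`, `b ∈ J`; since `I` is two-sided this coincides with the additive span of such products. -/
theorem stmt0 {T R : Type*} [CommRing T] [IsNoetherianRing T] [IsDomain T]
    [Ring R] [Algebra T R] [Algebra.FiniteType T R]
    (I J : Ideal R)
    (hI2 : ∀ a ∈ I, ∀ r : R, a * r ∈ I) (hJ2 : ∀ a ∈ J, ∀ r : R, a * r ∈ J)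
    (hI : Module.Finite T (R ⧸ I.restrictScalars T))
    (hJ : Module.Finite T (R ⧸ J.restrictScalars T)) :
    Module.Finite T
      (R ⧸ (Ideal.span {x : R | ∃ a ∈ I, ∃ b ∈ J, x = a * b}).restrictScalars T) :=
  stmt0_general I J hI hJ
end

section
/- Let T be a commutative noetherian integral domain and let R be a finitely generated associative T-algebra. If I is a two-sided ideal of R such that R/I is a finitely generated T-module, then I is finitely generated as a left ideal of R. -/
/-!
Pick a finitely generated `T`-submodule `W ∋ 1` of `R` with `I + W = R` and a finite set `s`
generating `R` as a `T`-algebra. Since `T` is noetherian, `K = I ∩ (W + span s * W)` is a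
finitely generated `T`-module; let `J ⊆ I` be the left ideal it generates. Then `W + J` contains
`1` and is stable under left multiplication by `s` (write `x * w = a + w'` with `a ∈ I`,
`w' ∈ W`; then `a ∈ K`), so `W + J = R`. Every `a ∈ I` is thus `w + j` with `w ∈ I ∩ W ⊆ J`,
whence `I = J`.
-/

open Submodule

theorem Submodule.CoFG.exists_fg_sup_eq_top {T M : Type*} [Ring T] [AddCommGroup M] [Module T M]
    {S : Submodule T M} (hS : S.CoFG) : ∃ W : Submodule T M, W.FG ∧ S ⊔ W = ⊤ := by
  obtain ⟨q, hq⟩ := hS.fg_top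
  set lift := Function.surjInv S.mkQ_surjective
  refine ⟨span T (lift '' q), fg_span (q.finite_toSet.image _), ?_⟩
  rw [← comap_map_mkQ, map_span, Set.image_image]
  simp only [lift, Function.surjInv_eq, Set.image_id', hq, comap_top]

section Algebra

variable {T R : Type*} [CommRing T] [Ring R] [Algebra T R]

theorem Submodule.eq_top_of_one_mem_of_mul_mem_s1 {s : Set R} (hs : Algebra.adjoin T s = ⊤)
    {U : Submodule T R} (h1 : 1 ∈ U) (hmul : ∀ x ∈ s, ∀ y ∈ U, x * y ∈ U) : U = ⊤ := by
  have hmul' : ∀ r ∈ Algebra.adjoin T s, ∀ y ∈ U, r * y ∈ U := by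
    intro r hr
    induction hr using Algebra.adjoin_induction with
    | mem x hx => exact hmul x hx
    | algebraMap t => exact fun y hy => by simpa [Algebra.smul_def] using U.smul_mem t hy
    | add x y _ _ hx hy => exact fun z hz => by simpa [add_mul] using add_mem (hx z hz) (hy z hz)
    | mul x y _ _ hx hy => exact fun z hz => by simpa [mul_assoc] using hx _ (hy z hz)
  exact eq_top_iff'.2 fun r => by simpa using hmul' r (hs ▸ Algebra.mem_top) 1 h1

theorem Ideal.eq_span_inf_of_restrictScalars_sup_eq_top {s : Set R}
    (hs : Algebra.adjoin T s = ⊤) {I : Ideal R} {W : Submodule T R} (hW1 : 1 ∈ W)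
    (hIW : I.restrictScalars T ⊔ W = ⊤) :
    I = Ideal.span (I.restrictScalars T ⊓ (W ⊔ Submodule.span T s * W) : Submodule T R) := by
  set K := I.restrictScalars T ⊓ (W ⊔ Submodule.span T s * W)
  set J := Ideal.span (K : Set R)
  have hJI : J ≤ I := Ideal.span_le.2 fun x hx => hx.1
  have hKJ : ∀ x ∈ K, x ∈ J := fun x hx => Ideal.subset_span hx
  have hWJ : W ⊔ J.restrictScalars T = ⊤ := by
    refine eq_top_of_one_mem_of_mul_mem_s1 hs (Submodule.mem_sup_left hW1) fun x hx y hy => ?_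
    obtain ⟨w, hw, j, hj, rfl⟩ := Submodule.mem_sup.1 hy
    rw [mul_add]
    refine add_mem ?_ (Submodule.mem_sup_right (J.mul_mem_left x hj))
    obtain ⟨a, ha, w', hw', hsum⟩ :=
      Submodule.mem_sup.1 (hIW ▸ Submodule.mem_top : x * w ∈ I.restrictScalars T ⊔ W)
    have haK : a ∈ K := by
      refine ⟨ha, ?_⟩
      rw [eq_sub_of_add_eq hsum]
      exact sub_mem (Submodule.mem_sup_right (Submodule.mul_mem_mul (Submodule.subset_span hx) hw))
        (Submodule.mem_sup_left hw')
    rw [← hsum]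
    exact add_mem (Submodule.mem_sup_right (hKJ a haK)) (Submodule.mem_sup_left hw')
  refine le_antisymm (fun a ha => ?_) hJI
  obtain ⟨w, hw, j, hj, rfl⟩ :=
    Submodule.mem_sup.1 (hWJ ▸ Submodule.mem_top : a ∈ W ⊔ J.restrictScalars T)
  have hwK : w ∈ K := ⟨by simpa using sub_mem ha (hJI hj), Submodule.mem_sup_left hw⟩
  exact add_mem (hKJ w hwK) hj

end Algebra

theorem stmt1_general {T R : Type*} [CommRing T] [IsNoetherianRing T]
    [Ring R] [Algebra T R] [Algebra.FiniteType T R]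
    (I : Ideal R)
    (hI : Module.Finite T (R ⧸ I.restrictScalars T)) :
    I.FG := by
  obtain ⟨s, hs⟩ := Algebra.FiniteType.out (R := T) (A := R)
  obtain ⟨W, hW, hIW⟩ := CoFG.exists_fg_sup_eq_top hI
  set W₁ := W ⊔ T ∙ 1
  have hW₁ : W₁.FG := hW.sup (fg_span_singleton 1)
  have hIW₁ : I.restrictScalars T ⊔ W₁ = ⊤ := by rw [← sup_assoc, hIW, top_sup_eq]
  rw [Ideal.eq_span_inf_of_restrictScalars_sup_eq_top hs
    (mem_sup_right (mem_span_singleton_self 1)) hIW₁]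
  exact FG.span <| (hW₁.sup ((fg_span s.finite_toSet).mul hW₁)).of_le inf_le_right

/-- Let `T` be a commutative noetherian integral domain and `R` a finitely
generated associative `T`-algebra.  If `I` is a two-sided ideal of `R` such that `R/I` is a
finitely generated `T`-module, then `I` is finitely generated as a left ideal of `R`. -/
theorem stmt1 {T R : Type*} [CommRing T] [IsNoetherianRing T] [IsDomain T]
    [Ring R] [Algebra T R] [Algebra.FiniteType T R]
    (I : Ideal R)
    (hI2 : ∀ a ∈ I, ∀ r : R, a * r ∈ I)
    (hI : Module.Finite T (R ⧸ I.restrictScalars T)) :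
    I.FG :=
  stmt1_general I hI
end
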